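/- arXiv:1102.4758 — 3 statements merged into one kernel-verified Lean document; each statement's English description precedes it below -/
import Mathlib

section
/- Let G = (V,E) be a countable, connected, simple graph in which every vertex has finite degree. The simple random walk on G is transient if and only if there exist real numbers (u(x,y))_{x,y∈V} such that: (i) u(y,x) = -u(x,y) for all x,y, and u(x,y) ≠ 0 only if {x,y} ∈ E; (ii) ∑_{x∈V} |∑_{y∈V} u(x,y)| < ∞ and ∑_{x∈V} (∑_{y∈V} u(x,y)) ≠ 0; (iii) ∑_{x∈V} ∑_{y∈V} u(x,y)^2 < ∞. -/
/-- `t`-step return/transition probabilities of the simple random walk on a locally finite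
graph `G` : at each step the walker moves to a uniformly chosen neighbour of the current
vertex (and stays put at an isolated vertex). -/
noncomputable def srwP {V : Type} (G : SimpleGraph V) [DecidableEq V]
    [∀ v, Fintype (G.neighborSet v)] : ℕ → V → V → ℝ
  | 0, x, y => if x = y then 1 else 0
  | n+1, x, y =>
      if G.degree x = 0 then srwP G n x y
      else (∑ z ∈ G.neighborFinset x, srwP G n z y) / G.degree x

/-!
If the walk is transient, the Green function `g x = ∑ₜ pₜ(x, o)` satisfies
`∑_{y ∼ x} (g x - g y) = deg o · [x = o]`, so its gradient is a flow with total influx `deg o`.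
Its energy is at most `2 deg(o) g(o)` by Green's identity `∑ (∇f)² = 2 ⟨f, Δf⟩`, applied to
the finitely supported truncations `g_N` of `g`, whose Laplacian is at most `deg(o) · δ_o`.

If the walk is recurrent at `o`, then `g_N(o) → ∞`, and comparing `g_N` along paths to `o`
shows that `min (1, C g_{N+M} / g_N(o))` is `1` on any prescribed finite set while its Dirichlet
energy is `O(1 / g_N(o))`. By summation by parts and Cauchy–Schwarz, the square of the pairing of
such a cutoff with the divergence of a finite energy flow is at most the product of the two
energies, while the pairing stays close to the total influx: so the total influx vanishes.
-/

open Finset Filter Topology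

lemma Function.HasFiniteSupport.exists_finset {α M : Type*} [Zero M] {f : α → M}
    (hf : f.HasFiniteSupport) : ∃ s : Finset α, ∀ x ∉ s, f x = 0 :=
  ⟨hf.toFinset, fun _ hx => Function.notMem_support.1 (mt hf.mem_toFinset.2 hx)⟩

lemma abs_tsum_mul_sub_tsum_le {ι : Type*} {d f : ι → ℝ} (hd : Summable d)
    (hf0 : ∀ x, 0 ≤ f x) (hf1 : ∀ x, f x ≤ 1) {A : Finset ι} (hA : ∀ x ∈ A, f x = 1) :
    |∑' x, d x * f x - ∑' x, d x| ≤ ∑' x, |d x| - ∑ x ∈ A, |d x| := by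
  have hdf : Summable fun x => d x * f x := hd.abs.of_norm_bounded fun x => by
    rw [Real.norm_eq_abs, abs_mul, abs_of_nonneg (hf0 x)]
    exact mul_le_of_le_one_right (abs_nonneg _) (hf1 x)
  have hdf' : Summable fun x => |d x| * f x := hd.abs.of_nonneg_of_le
    (fun x => mul_nonneg (abs_nonneg _) (hf0 x))
    fun x => mul_le_of_le_one_right (abs_nonneg _) (hf1 x)
  have hrest : Summable fun x => ‖d x * (1 - f x)‖ := (hd.abs.sub hdf').congr fun x => by
    rw [Real.norm_eq_abs, abs_mul, abs_of_nonneg (sub_nonneg.2 (hf1 x))]; ring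
  calc |∑' x, d x * f x - ∑' x, d x| = ‖∑' x, d x * (1 - f x)‖ := by
        rw [abs_sub_comm, ← hd.tsum_sub hdf, Real.norm_eq_abs]
        simp only [mul_sub, mul_one]
    _ ≤ ∑' x, ‖d x * (1 - f x)‖ := norm_tsum_le_tsum_norm hrest
    _ = ∑' x, |d x| - ∑' x, |d x| * f x := by
        rw [← hd.abs.tsum_sub hdf']
        congr 1 with x
        rw [Real.norm_eq_abs, abs_mul, abs_of_nonneg (sub_nonneg.2 (hf1 x))]; ring
    _ ≤ ∑' x, |d x| - ∑ x ∈ A, |d x| := by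
        gcongr
        calc ∑ x ∈ A, |d x| = ∑ x ∈ A, |d x| * f x :=
              sum_congr rfl fun x hx => by rw [hA x hx, mul_one]
          _ ≤ ∑' x, |d x| * f x :=
              hdf'.sum_le_tsum A fun x _ => mul_nonneg (abs_nonneg _) (hf0 x)

namespace SimpleGraph

variable {V : Type} (G : SimpleGraph V)

section Gradient

variable [DecidableRel G.Adj]

def grad (f : V → ℝ) (x y : V) : ℝ := if G.Adj x y then f x - f y else 0

lemma grad_swap (f : V → ℝ) (x y : V) : G.grad f y x = -G.grad f x y := by
  simp only [grad, G.adj_comm y x]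
  split_ifs <;> ring

lemma adj_of_grad_ne_zero {f : V → ℝ} {x y : V} (h : G.grad f x y ≠ 0) : G.Adj x y :=
  by_contra fun hxy => h (if_neg hxy)

lemma grad_min_sq_le (a c : ℝ) (h : V → ℝ) (x y : V) :
    G.grad (fun z => min a (c * h z)) x y ^ 2 ≤ c ^ 2 * G.grad h x y ^ 2 := by
  unfold grad
  split_ifs
  · rw [← mul_pow, sq_le_sq]
    calc |min a (c * h x) - min a (c * h y)| ≤ max |a - a| |c * h x - c * h y| :=
          abs_min_sub_min_le_max _ _ _ _
      _ = |c * (h x - h y)| := by rw [sub_self, abs_zero, mul_sub, max_eq_right (abs_nonneg _)]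
  · simp

end Gradient

section LocallyFinite

variable [∀ v, Fintype (G.neighborSet v)]

lemma tsum_eq_sum_neighborFinset {x : V} {w : V → ℝ} (hw : ∀ y, w y ≠ 0 → G.Adj x y) :
    ∑' y, w y = ∑ y ∈ G.neighborFinset x, w y :=
  tsum_eq_sum fun y hy => by_contra fun h => hy ((G.mem_neighborFinset x y).2 (hw y h))

lemma two_mul_sum_mul_sum_neighborFinset {w : V → V → ℝ} (hanti : ∀ x y, w y x = -w x y)
    (hsupp : ∀ x y, w x y ≠ 0 → G.Adj x y) {f : V → ℝ} {s A : Finset V}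
    (hf : ∀ x ∉ s, f x = 0) (hsA : s ⊆ A) (hA : ∀ x ∈ s, G.neighborFinset x ⊆ A) :
    2 * ∑ x ∈ s, f x * ∑ y ∈ G.neighborFinset x, w x y
      = ∑ x ∈ A, ∑ y ∈ A, w x y * (f x - f y) := by
  have hrow : ∑ x ∈ A, ∑ y ∈ A, w x y * f x = ∑ x ∈ s, f x * ∑ y ∈ G.neighborFinset x, w x y := by
    rw [← sum_subset hsA fun x _ hx => by simp [hf x hx]]
    refine sum_congr rfl fun x hx => ?_
    rw [← sum_mul, mul_comm, ← sum_subset (hA x hx) fun y _ hy => ?_]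
    exact by_contra fun h => hy ((G.mem_neighborFinset x y).2 (hsupp x y h))
  have hswap : ∑ x ∈ A, ∑ y ∈ A, w x y * f y = -∑ x ∈ A, ∑ y ∈ A, w x y * f x := by
    rw [sum_comm, ← sum_neg_distrib]
    refine sum_congr rfl fun x _ => ?_
    rw [← sum_neg_distrib]
    exact sum_congr rfl fun y _ => by rw [hanti]; ring
  simp only [mul_sub, sum_sub_distrib, hswap, hrow]
  ring

lemma sum_neighborFinset_grad [DecidableRel G.Adj] (f : V → ℝ) (x : V) :
    ∑ y ∈ G.neighborFinset x, G.grad f x y = G.degree x * f x - ∑ y ∈ G.neighborFinset x, f y := by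
  have hedge : ∀ y ∈ G.neighborFinset x, G.grad f x y = f x - f y :=
    fun y hy => if_pos ((G.mem_neighborFinset x y).1 hy)
  rw [sum_congr rfl hedge, sum_sub_distrib,
    sum_const, card_neighborFinset_eq_degree, nsmul_eq_mul]

variable [DecidableEq V]

lemma exists_superset_neighborFinset (s : Finset V) :
    ∃ A : Finset V, s ⊆ A ∧ ∀ x ∈ s, G.neighborFinset x ⊆ A :=
  ⟨s ∪ s.biUnion fun x => G.neighborFinset x, subset_union_left,
    fun _ hx => (subset_biUnion_of_mem (fun x => G.neighborFinset x) hx).trans subset_union_right⟩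

section GreenIdentity

variable [DecidableRel G.Adj]

/-- Green's identity `∑ (∇f)² = 2 ⟨f, Δf⟩` for finitely supported `f`; an inequality because `F`
is an arbitrary finite set of ordered pairs. -/
lemma sum_grad_sq_le {f : V → ℝ} {s : Finset V} (hf : ∀ x ∉ s, f x = 0) (F : Finset (V × V)) :
    ∑ p ∈ F, G.grad f p.1 p.2 ^ 2
      ≤ 2 * ∑ x ∈ s, f x * (G.degree x * f x - ∑ y ∈ G.neighborFinset x, f y) := by
  obtain ⟨A, hsA, hA⟩ := G.exists_superset_neighborFinset s
  have hsupp : ∀ p ∈ F, G.grad f p.1 p.2 ^ 2 ≠ 0 → p ∈ A ×ˢ A := by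
    rintro ⟨x, y⟩ - hp
    have hxy : G.Adj x y := G.adj_of_grad_ne_zero (pow_ne_zero_iff two_ne_zero |>.1 hp)
    have hmem : ∀ a b, G.Adj a b → a ∈ s → a ∈ A ∧ b ∈ A := fun a b hab ha =>
      ⟨hsA ha, hA a ha ((G.mem_neighborFinset a b).2 hab)⟩
    by_cases hx : x ∈ s
    · exact mem_product.2 (hmem x y hxy hx)
    · have hy : y ∈ s := by_contra fun hy => hp (by simp [grad, hxy, hf x hx, hf y hy])
      exact mem_product.2 (hmem y x hxy.symm hy).symm
  calc ∑ p ∈ F, G.grad f p.1 p.2 ^ 2 = ∑ p ∈ F with p ∈ A ×ˢ A, G.grad f p.1 p.2 ^ 2 :=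
        (sum_filter_of_ne hsupp).symm
    _ ≤ ∑ p ∈ A ×ˢ A, G.grad f p.1 p.2 ^ 2 :=
        sum_le_sum_of_subset_of_nonneg (fun p hp => (mem_filter.1 hp).2) fun _ _ _ => sq_nonneg _
    _ = ∑ x ∈ A, ∑ y ∈ A, G.grad f x y * (f x - f y) := by
        rw [sum_product]
        refine sum_congr rfl fun x _ => sum_congr rfl fun y _ => ?_
        unfold grad
        split_ifs <;> ring
    _ = _ := by
        rw [← G.two_mul_sum_mul_sum_neighborFinset (G.grad_swap f)
          (fun _ _ => G.adj_of_grad_ne_zero) hf hsA hA]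
        simp only [sum_neighborFinset_grad]

lemma sq_two_mul_tsum_mul_le {u : V → V → ℝ} (hanti : ∀ x y, u y x = -u x y)
    (hsupp : ∀ x y, u x y ≠ 0 → G.Adj x y) (hE : Summable fun p : V × V => u p.1 p.2 ^ 2)
    {f : V → ℝ} (hf : f.HasFiniteSupport) {D : ℝ}
    (hD : ∀ F : Finset (V × V), ∑ p ∈ F, G.grad f p.1 p.2 ^ 2 ≤ D) :
    (2 * ∑' x, (∑' y, u x y) * f x) ^ 2 ≤ (∑' p : V × V, u p.1 p.2 ^ 2) * D := by
  obtain ⟨s, hs⟩ := hf.exists_finset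
  obtain ⟨A, hsA, hA⟩ := G.exists_superset_neighborFinset s
  have hpairing : ∑' x, (∑' y, u x y) * f x = ∑ x ∈ s, f x * ∑ y ∈ G.neighborFinset x, u x y := by
    rw [tsum_eq_sum fun x hx => by rw [hs x hx, mul_zero]]
    exact sum_congr rfl fun x _ => by rw [G.tsum_eq_sum_neighborFinset (hsupp x), mul_comm]
  have hparts : 2 * ∑ x ∈ s, f x * ∑ y ∈ G.neighborFinset x, u x y
      = ∑ p ∈ A ×ˢ A, u p.1 p.2 * G.grad f p.1 p.2 := by
    rw [G.two_mul_sum_mul_sum_neighborFinset hanti hsupp hs hsA hA, sum_product]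
    refine sum_congr rfl fun x _ => sum_congr rfl fun y _ => ?_
    by_cases hxy : G.Adj x y
    · rw [grad, if_pos hxy]
    · rw [not_imp_comm.1 (hsupp x y) hxy, zero_mul, zero_mul]
  rw [hpairing, hparts]
  calc (∑ p ∈ A ×ˢ A, u p.1 p.2 * G.grad f p.1 p.2) ^ 2
      ≤ (∑ p ∈ A ×ˢ A, u p.1 p.2 ^ 2) * ∑ p ∈ A ×ˢ A, G.grad f p.1 p.2 ^ 2 :=
        sum_mul_sq_le_sq_mul_sq _ _ _
    _ ≤ (∑' p : V × V, u p.1 p.2 ^ 2) * D :=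
        mul_le_mul (hE.sum_le_tsum _ fun _ _ => sq_nonneg _) (hD _)
          (sum_nonneg fun _ _ => sq_nonneg _) (tsum_nonneg fun _ => sq_nonneg _)

end GreenIdentity

lemma srwP_nonneg (t : ℕ) (x y : V) : 0 ≤ srwP G t x y := by
  induction t generalizing x with
  | zero => unfold srwP; split_ifs <;> norm_num
  | succ t ih =>
    unfold srwP
    split_ifs
    · exact ih x
    · exact div_nonneg (sum_nonneg fun z _ => ih z) (Nat.cast_nonneg _)

lemma srwP_le_one (t : ℕ) (x y : V) : srwP G t x y ≤ 1 := by
  induction t generalizing x with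
  | zero => unfold srwP; split_ifs <;> norm_num
  | succ t ih =>
    unfold srwP
    split_ifs with hx
    · exact ih x
    · rw [div_le_one (Nat.cast_pos.2 (Nat.pos_of_ne_zero hx))]
      calc ∑ z ∈ G.neighborFinset x, srwP G t z y ≤ ∑ z ∈ G.neighborFinset x, (1 : ℝ) :=
            sum_le_sum fun z _ => ih z
        _ = G.degree x := by simp

lemma degree_mul_srwP_succ (t : ℕ) (x y : V) :
    G.degree x * srwP G (t + 1) x y = ∑ z ∈ G.neighborFinset x, srwP G t z y := by
  by_cases hx : G.degree x = 0
  · have hN : G.neighborFinset x = ∅ := by rwa [← card_eq_zero, card_neighborFinset_eq_degree]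
    simp [hx, hN]
  · rw [srwP, if_neg hx, mul_div_cancel₀ _ (Nat.cast_ne_zero.2 hx)]

lemma hasFiniteSupport_srwP (t : ℕ) (y : V) : (fun x => srwP G t x y).HasFiniteSupport := by
  induction t with
  | zero =>
    exact (Set.finite_singleton y).subset fun x hx => by simpa [srwP] using hx
  | succ t ih =>
    refine (ih.union (ih.biUnion fun z _ => (G.neighborSet z).toFinite)).subset fun x hx => ?_
    by_cases hdeg : G.degree x = 0
    · left
      simpa [srwP, hdeg] using hx
    · have hsum : ∑ z ∈ G.neighborFinset x, srwP G t z y ≠ 0 := by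
        rw [← degree_mul_srwP_succ]
        exact mul_ne_zero (Nat.cast_ne_zero.2 hdeg) hx
      obtain ⟨z, hz, hz0⟩ := exists_ne_zero_of_sum_ne_zero hsum
      exact Or.inr (Set.mem_biUnion hz0 (G.adj_symm ((G.mem_neighborFinset x z).1 hz)))

lemma exists_srwP_le_mul_srwP_of_walk {a x : V} (w : G.Walk a x) (y : V) :
    ∃ C : ℝ, 0 ≤ C ∧ ∀ t, srwP G t x y ≤ C * srwP G (t + w.length) a y := by
  induction w with
  | nil => exact ⟨1, zero_le_one, fun t => by simp⟩
  | @cons a b x hab w ih =>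
    obtain ⟨C, hC, hle⟩ := ih
    refine ⟨C * G.degree a, by positivity, fun t => ?_⟩
    have hstep : srwP G (t + w.length) b y ≤ G.degree a * srwP G (t + w.length + 1) a y := by
      rw [degree_mul_srwP_succ]
      exact single_le_sum (fun z _ => srwP_nonneg G _ z y) ((G.mem_neighborFinset a b).2 hab)
    calc srwP G t x y ≤ C * srwP G (t + w.length) b y := hle t
      _ ≤ C * (G.degree a * srwP G (t + w.length + 1) a y) := by gcongr
      _ = C * G.degree a * srwP G (t + (Walk.cons hab w).length) a y := by
        rw [Walk.length_cons, ← add_assoc, mul_assoc]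

lemma summable_srwP_of_reachable {o x : V} (h : G.Reachable o x)
    (ho : Summable fun t => srwP G t o o) : Summable fun t => srwP G t x o := by
  obtain ⟨w⟩ := h
  obtain ⟨C, -, hle⟩ := G.exists_srwP_le_mul_srwP_of_walk w o
  exact (((summable_nat_add_iff w.length).2 ho).mul_left C).of_nonneg_of_le
    (fun t => srwP_nonneg G t x o) hle

lemma degree_ne_zero_of_summable_srwP {o : V} (ho : Summable fun t => srwP G t o o) :
    G.degree o ≠ 0 := by
  intro h
  have hone : ∀ t, srwP G t o o = 1 := by
    intro t
    induction t with
    | zero => simp [srwP]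
    | succ t ih => rw [srwP, if_pos h, ih]
  have h0 := ho.tendsto_atTop_zero
  simp only [hone] at h0
  exact one_ne_zero (tendsto_nhds_unique tendsto_const_nhds h0)

noncomputable def greenTrunc (o : V) (N : ℕ) (x : V) : ℝ := ∑ t ∈ range N, srwP G t x o

noncomputable def green (o x : V) : ℝ := ∑' t, srwP G t x o

lemma greenTrunc_nonneg (o : V) (N : ℕ) (x : V) : 0 ≤ G.greenTrunc o N x :=
  sum_nonneg fun t _ => srwP_nonneg G t x o

lemma greenTrunc_mono (o x : V) : Monotone fun N => G.greenTrunc o N x := fun _ _ h =>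
  sum_le_sum_of_subset_of_nonneg (range_subset_range.2 h) fun t _ _ => srwP_nonneg G t x o

lemma hasFiniteSupport_greenTrunc (o : V) (N : ℕ) : (G.greenTrunc o N).HasFiniteSupport :=
  Function.HasFiniteSupport.sum (fun t => G.hasFiniteSupport_srwP t o) _

lemma sum_neighborFinset_greenTrunc (o : V) (N : ℕ) (x : V) :
    ∑ y ∈ G.neighborFinset x, G.greenTrunc o N y
      = G.degree x * (G.greenTrunc o (N + 1) x - if x = o then 1 else 0) := by
  simp only [greenTrunc]
  rw [sum_comm, sum_range_succ']
  simp only [← degree_mul_srwP_succ, ← mul_sum]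
  simp [srwP]

lemma greenTrunc_add_le (o : V) (N M : ℕ) (x : V) :
    G.greenTrunc o (N + M) x ≤ G.greenTrunc o N x + M := by
  simp only [greenTrunc, sum_range_add]
  gcongr
  calc ∑ t ∈ range M, srwP G (N + t) x o ≤ ∑ t ∈ range M, (1 : ℝ) :=
        sum_le_sum fun t _ => srwP_le_one G _ x o
    _ = M := by simp

lemma exists_greenTrunc_le_mul_of_walk {x o : V} (w : G.Walk x o) :
    ∃ C : ℝ, 0 ≤ C ∧ ∀ N, G.greenTrunc o N o ≤ C * G.greenTrunc o (N + w.length) x := by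
  obtain ⟨C, hC, hle⟩ := G.exists_srwP_le_mul_srwP_of_walk w o
  refine ⟨C, hC, fun N => ?_⟩
  calc G.greenTrunc o N o ≤ ∑ t ∈ range N, C * srwP G (t + w.length) x o :=
        sum_le_sum fun t _ => hle t
    _ ≤ C * G.greenTrunc o (N + w.length) x := by
        rw [← mul_sum, greenTrunc, add_comm, sum_range_add]
        gcongr
        simp only [add_comm _ w.length]
        exact le_add_of_nonneg_left (sum_nonneg fun t _ => srwP_nonneg G t x o)

lemma exists_greenTrunc_le_mul_of_finset (hconn : G.Connected) (o : V) (A : Finset V) :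
    ∃ C : ℝ, 0 ≤ C ∧ ∃ M : ℕ, ∀ x ∈ A, ∀ N,
      G.greenTrunc o N o ≤ C * G.greenTrunc o (N + M) x := by
  choose C hC0 hC using fun x => G.exists_greenTrunc_le_mul_of_walk (hconn x o).some
  refine ⟨∑ x ∈ A, C x, sum_nonneg fun x _ => hC0 x,
    ∑ x ∈ A, (hconn x o).some.length, fun x hx N => (hC x N).trans ?_⟩
  refine mul_le_mul (single_le_sum (fun y _ => hC0 y) hx) (G.greenTrunc_mono o x ?_)
    (G.greenTrunc_nonneg o _ x) (sum_nonneg fun y _ => hC0 y)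
  exact Nat.add_le_add_left
    (single_le_sum (f := fun y => (hconn y o).some.length) (fun _ _ => Nat.zero_le _) hx) N

lemma sum_neighborFinset_green {o : V} (hs : ∀ x, Summable fun t => srwP G t x o) (x : V) :
    ∑ y ∈ G.neighborFinset x, G.green o y
      = G.degree x * (G.green o x - if x = o then 1 else 0) := by
  simp only [green]
  rw [← Summable.tsum_finsetSum fun y _ => hs y]
  simp only [← degree_mul_srwP_succ]
  rw [tsum_mul_left, (hs x).tsum_eq_zero_add]
  simp [srwP]

section Energy

variable [DecidableRel G.Adj]

lemma sum_grad_greenTrunc_sq_le (o : V) (N : ℕ) (F : Finset (V × V)) :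
    ∑ p ∈ F, G.grad (G.greenTrunc o N) p.1 p.2 ^ 2 ≤ 2 * G.degree o * G.greenTrunc o N o := by
  obtain ⟨s, hs⟩ := (G.hasFiniteSupport_greenTrunc o N).exists_finset
  set g := G.greenTrunc o N
  have hterm : ∀ x, g x * (G.degree x * g x - ∑ y ∈ G.neighborFinset x, g y)
      ≤ if x = o then G.degree o * g o else 0 := by
    intro x
    rw [sum_neighborFinset_greenTrunc]
    have hkey := mul_nonneg (mul_nonneg (Nat.cast_nonneg (G.degree x)) (G.greenTrunc_nonneg o N x))
      (sub_nonneg.2 (G.greenTrunc_mono o x N.le_succ))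
    split_ifs with h
    · subst h; nlinarith
    · nlinarith
  calc _ ≤ 2 * ∑ x ∈ s, g x * (G.degree x * g x - ∑ y ∈ G.neighborFinset x, g y) :=
        G.sum_grad_sq_le hs F
    _ ≤ 2 * ∑ x ∈ s, if x = o then G.degree o * g o else 0 := by gcongr with x; exact hterm x
    _ ≤ 2 * G.degree o * g o := by
        rw [sum_ite_eq', mul_assoc]
        split_ifs
        · rfl
        · have := G.greenTrunc_nonneg o N o
          rw [mul_zero]
          positivity

lemma tsum_grad_green {o : V} (hs : ∀ x, Summable fun t => srwP G t x o) (x : V) :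
    ∑' y, G.grad (G.green o) x y = if x = o then (G.degree o : ℝ) else 0 := by
  rw [G.tsum_eq_sum_neighborFinset fun y => G.adj_of_grad_ne_zero, sum_neighborFinset_grad,
    G.sum_neighborFinset_green hs]
  split_ifs with h
  · subst h; ring
  · ring

lemma summable_grad_green_sq {o : V} (hs : ∀ x, Summable fun t => srwP G t x o) :
    Summable fun p : V × V => G.grad (G.green o) p.1 p.2 ^ 2 := by
  refine summable_of_sum_le (c := 2 * G.degree o * G.green o o) (fun p => sq_nonneg _) fun F => ?_
  have hgreen : ∀ x, Tendsto (fun N => G.greenTrunc o N x) atTop (𝓝 (G.green o x)) :=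
    fun x => (hs x).hasSum.tendsto_sum_nat
  have hgrad : ∀ x y, Tendsto (fun N => G.grad (G.greenTrunc o N) x y) atTop
      (𝓝 (G.grad (G.green o) x y)) := by
    intro x y
    unfold grad
    split_ifs
    · exact (hgreen x).sub (hgreen y)
    · exact tendsto_const_nhds
  refine le_of_tendsto (tendsto_finsetSum F fun p _ => (hgrad p.1 p.2).pow 2)
    (Eventually.of_forall fun N => ?_)
  calc _ ≤ 2 * G.degree o * G.greenTrunc o N o := G.sum_grad_greenTrunc_sq_le o N F
    _ ≤ 2 * G.degree o * G.green o o := by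
        gcongr
        exact (hs o).sum_le_tsum _ fun t _ => srwP_nonneg G t o o

lemma exists_cutoff_of_not_summable_srwP (hconn : G.Connected) {o : V}
    (ho : ¬Summable fun t => srwP G t o o) (A : Finset V) {ε : ℝ} (hε : 0 < ε) :
    ∃ f : V → ℝ, f.HasFiniteSupport ∧ (∀ x, 0 ≤ f x ∧ f x ≤ 1) ∧ (∀ x ∈ A, f x = 1) ∧
      ∀ F : Finset (V × V), ∑ p ∈ F, G.grad f p.1 p.2 ^ 2 ≤ ε := by
  obtain ⟨C, hC, M, hCM⟩ := G.exists_greenTrunc_le_mul_of_finset hconn o A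
  have hrec : Tendsto (fun N => G.greenTrunc o N o) atTop atTop :=
    (not_summable_iff_tendsto_nat_atTop_of_nonneg fun t => srwP_nonneg G t o o).1 ho
  obtain ⟨N, hN⟩ :=
    (hrec.eventually_ge_atTop (max (max 1 M) (4 * G.degree o * C ^ 2 / ε))).exists
  set T := G.greenTrunc o N o
  have hT1 : 1 ≤ T := le_trans (by simp) hN
  have hTM : (M : ℝ) ≤ T := le_trans (by simp) hN
  have hTε : 4 * G.degree o * C ^ 2 ≤ ε * T := by
    rw [← div_le_iff₀' hε]; exact le_trans (le_max_right _ _) hN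
  set h := G.greenTrunc o (N + M)
  have hcoef : 0 ≤ C / T := div_nonneg hC (by linarith)
  refine ⟨fun x => min 1 (C / T * h x), ?_, fun x => ⟨?_, min_le_left _ _⟩, fun x hx => ?_,
    fun F => ?_⟩
  · exact (G.hasFiniteSupport_greenTrunc o (N + M)).subset fun x hx hx0 =>
      hx (by simp [h, hx0])
  · exact le_min zero_le_one (mul_nonneg hcoef (G.greenTrunc_nonneg o _ x))
  · refine min_eq_left ?_
    rw [div_mul_eq_mul_div, le_div_iff₀ (by linarith), one_mul]
    exact hCM x hx N
  · calc ∑ p ∈ F, G.grad (fun x => min 1 (C / T * h x)) p.1 p.2 ^ 2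
        ≤ ∑ p ∈ F, (C / T) ^ 2 * G.grad h p.1 p.2 ^ 2 :=
          sum_le_sum fun p _ => G.grad_min_sq_le 1 (C / T) h p.1 p.2
      _ = (C / T) ^ 2 * ∑ p ∈ F, G.grad h p.1 p.2 ^ 2 := (mul_sum _ _ _).symm
      _ ≤ (C / T) ^ 2 * (2 * G.degree o * h o) := by
          gcongr; exact G.sum_grad_greenTrunc_sq_le o (N + M) F
      _ ≤ (C / T) ^ 2 * (2 * G.degree o * (2 * T)) := by
          gcongr; linarith [G.greenTrunc_add_le o N M o]
      _ = 4 * G.degree o * C ^ 2 / T := by field_simp; ring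
      _ ≤ ε := by rw [div_le_iff₀ (by linarith)]; exact hTε

end Energy

theorem exists_finite_energy_flow_of_summable_srwP (hconn : G.Connected) {o : V}
    (ho : Summable fun t => srwP G t o o) :
    ∃ u : V → V → ℝ,
      ((∀ x y, u y x = -u x y) ∧ (∀ x y, u x y ≠ 0 → G.Adj x y)) ∧
      (Summable (fun x => ∑' y, u x y) ∧ (∑' x, ∑' y, u x y) ≠ 0) ∧
      Summable (fun p : V × V => (u p.1 p.2) ^ 2) := by
  classical
  have hs : ∀ x, Summable fun t => srwP G t x o :=
    fun x => G.summable_srwP_of_reachable (hconn o x) ho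
  refine ⟨G.grad (G.green o), ⟨G.grad_swap _, fun _ _ => G.adj_of_grad_ne_zero⟩, ?_,
    G.summable_grad_green_sq hs⟩
  simp only [G.tsum_grad_green hs]
  refine ⟨(hasSum_ite_eq o _).summable, ?_⟩
  rw [tsum_ite_eq]
  exact Nat.cast_ne_zero.2 (G.degree_ne_zero_of_summable_srwP ho)

theorem summable_srwP_of_finite_energy_flow (hconn : G.Connected) {u : V → V → ℝ}
    (hanti : ∀ x y, u y x = -u x y) (hsupp : ∀ x y, u x y ≠ 0 → G.Adj x y)
    (hdiv : Summable fun x => ∑' y, u x y) (hL : ∑' x, ∑' y, u x y ≠ 0)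
    (hE : Summable fun p : V × V => u p.1 p.2 ^ 2) (o : V) :
    Summable fun t => srwP G t o o := by
  classical
  by_contra ho
  set d := fun x => ∑' y, u x y
  set L := ∑' x, d x
  set E := ∑' p : V × V, u p.1 p.2 ^ 2
  have hL0 : 0 < |L| := abs_pos.2 hL
  have hE0 : 0 ≤ E := tsum_nonneg fun _ => sq_nonneg _
  obtain ⟨A, hA⟩ : ∃ A : Finset V, ∑' x, |d x| - ∑ x ∈ A, |d x| < |L| / 2 :=
    (((tendsto_order.1 hdiv.abs.hasSum).1 (∑' x, |d x| - |L| / 2) (by linarith)).exists).imp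
      fun _ h => by linarith
  obtain ⟨f, hf, hf01, hfA, hD⟩ :=
    G.exists_cutoff_of_not_summable_srwP hconn ho A (ε := L ^ 2 / (E + 1)) (by positivity)
  have hclose := abs_tsum_mul_sub_tsum_le hdiv (fun x => (hf01 x).1) (fun x => (hf01 x).2) hfA
  have hlow : L ^ 2 ≤ (2 * ∑' x, d x * f x) ^ 2 := by
    rw [sq_le_sq, abs_mul, abs_two]
    linarith [abs_sub_abs_le_abs_sub L (∑' x, d x * f x), abs_sub_comm L (∑' x, d x * f x)]
  have hup := G.sq_two_mul_tsum_mul_le hanti hsupp hE hf hD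
  have hsmall : E * (L ^ 2 / (E + 1)) < L ^ 2 := by
    rw [mul_div_assoc', div_lt_iff₀ (by linarith)]
    nlinarith [sq_pos_of_ne_zero hL]
  linarith

end LocallyFinite

end SimpleGraph

theorem transient_iff_finite_energy_flow_general {V : Type} [DecidableEq V]
    (G : SimpleGraph V) [∀ v, Fintype (G.neighborSet v)] (hconn : G.Connected) :
    (∀ o : V, Summable fun t => srwP G t o o) ↔
    ∃ u : V → V → ℝ,
      ((∀ x y, u y x = -u x y) ∧ (∀ x y, u x y ≠ 0 → G.Adj x y)) ∧
      (Summable (fun x => ∑' y, u x y) ∧ (∑' x, ∑' y, u x y) ≠ 0) ∧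
      Summable (fun p : V × V => (u p.1 p.2) ^ 2) := by
  constructor
  · intro h
    obtain ⟨o⟩ := hconn.nonempty
    exact G.exists_finite_energy_flow_of_summable_srwP hconn (h o)
  · rintro ⟨u, ⟨hanti, hsupp⟩, ⟨hdiv, hL⟩, hE⟩
    exact G.summable_srwP_of_finite_energy_flow hconn hanti hsupp hdiv hL hE

/-- The simple random walk on a countable, connected, simple graph `G` all of whose vertices
have finite degree is transient (i.e. for every vertex `o`, the expected number of visits to
`o`, `∑_t p_t(o,o)`, is finite) if and only if there is a flow `u` on `G` with absolutely
summable influxes, nonzero total influx, and finite energy. -/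
theorem transient_iff_finite_energy_flow {V : Type} [Countable V] [DecidableEq V]
    (G : SimpleGraph V) [∀ v, Fintype (G.neighborSet v)] (hconn : G.Connected) :
    (∀ o : V, Summable fun t => srwP G t o o) ↔
    ∃ u : V → V → ℝ,
      ((∀ x y, u y x = -u x y) ∧ (∀ x y, u x y ≠ 0 → G.Adj x y)) ∧
      (Summable (fun x => ∑' y, u x y) ∧ (∑' x, ∑' y, u x y) ≠ 0) ∧
      Summable (fun p : V × V => (u p.1 p.2) ^ 2) :=
  transient_iff_finite_energy_flow_general G hconn
end

section
/- Let d ≥ 3 and ε ∈ (0,1). There exists a constant C = C(d,ε) < ∞ such that for every x ∈ Z^d with |x| ≥ 1, the normalized surface (Haar) measure λ of the set of directions {v ∈ S^{d-1} : x ∈ ∪_{n=1}^∞ B(nv, n^ε)} is at most C |x|^{(ε-1)(d-1)}. -/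
/-!
A direction `v` counted for `x` satisfies `‖x - n v‖ ≤ √d n^ε` for some `n ≥ 1`; this forces
`n ≥ ‖x‖ / (1 + √d)`, so `v` lies in the spherical cap of radius `O(|x|^(ε-1))` around `x / ‖x‖`.
A rotation-invariant probability measure gives the same mass to all caps of a given radius `r`,
and a grid of mesh `3r` in the chart `y ↦ (y, √(1 - ‖y‖²))` of the sphere carries about
`r^(1-d)` disjoint such caps, so each has mass `O(r^(d-1))`.
-/

open MeasureTheory

/-- Points of the lattice `ℤ^d`. -/
abbrev Zd (d : ℕ) := Fin d → ℤ

/-- The `ℓ^∞` norm of a lattice point. -/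
def norminf {d : ℕ} (x : Zd d) : ℕ := Finset.univ.sup fun j => (x j).natAbs

open Metric Function

section Rotation

variable {E : Type*} [NormedAddCommGroup E] [InnerProductSpace ℝ E]
  [MeasurableSpace E] [BorelSpace E] {μ : Measure E}

theorem measure_closedBall_eq_of_norm_eq (hμ : ∀ Q : E ≃ₗᵢ[ℝ] E, μ.map Q = μ) {u₁ u₂ : E}
    (h : ‖u₁‖ = ‖u₂‖) (r : ℝ) : μ (closedBall u₁ r) = μ (closedBall u₂ r) := by
  set Q := Submodule.reflection (ℝ ∙ (u₁ - u₂))ᗮ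
  have hQ : Q ⁻¹' closedBall u₂ r = closedBall u₁ r := by
    rw [Q.preimage_closedBall, ← Submodule.reflection_sub h, Submodule.reflection_symm,
      Submodule.reflection_reflection]
  rw [← hQ, ← Measure.map_apply Q.continuous.measurable measurableSet_closedBall, hμ]

theorem card_mul_measure_closedBall_le (hμ : ∀ Q : E ≃ₗᵢ[ℝ] E, μ.map Q = μ) {ι : Type*}
    [Fintype ι] (P : ι → E) (u : E) (hP : ∀ i, ‖P i‖ = ‖u‖) {r : ℝ}
    (hsep : Pairwise fun i j => 2 * r < dist (P i) (P j)) :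
    Fintype.card ι * μ (closedBall u r) ≤ μ Set.univ := by
  have hdisj : Pairwise (Disjoint on fun i => closedBall (P i) r) := fun i j hij =>
    closedBall_disjoint_closedBall (by linarith [hsep hij] : r + r < _)
  calc Fintype.card ι * μ (closedBall u r) = ∑ i, μ (closedBall (P i) r) := by
        simp [measure_closedBall_eq_of_norm_eq hμ (hP _)]
    _ = μ (⋃ i, closedBall (P i) r) := by
        rw [measure_iUnion hdisj fun _ => measurableSet_closedBall, tsum_fintype]
    _ ≤ μ Set.univ := measure_mono (Set.subset_univ _)

end Rotation

theorem norm_toLp_snoc_sqrt {k : ℕ} (y : Fin k → ℝ) (hy : ∑ j, y j ^ 2 ≤ 1) :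
    ‖(WithLp.toLp 2 (Fin.snoc y √(1 - ∑ j, y j ^ 2)) : EuclideanSpace ℝ (Fin (k + 1)))‖ = 1 := by
  rw [EuclideanSpace.norm_eq, Fin.sum_univ_castSucc]
  simp [Real.sq_sqrt (sub_nonneg.mpr hy)]

theorem exists_unit_vectors_pairwise_le_dist (k m : ℕ) {δ : ℝ} (hδ : 0 ≤ δ)
    (hm : k * (((m : ℝ) - 1) * δ) ^ 2 ≤ 1) :
    ∃ P : (Fin k → Fin m) → EuclideanSpace ℝ (Fin (k + 1)),
      (∀ c, ‖P c‖ = 1) ∧ Pairwise fun c c' => δ ≤ dist (P c) (P c') := by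
  set y : (Fin k → Fin m) → Fin k → ℝ := fun c j => δ * (c j : ℕ)
  have hy : ∀ c, ∑ j, y c j ^ 2 ≤ 1 := fun c => by
    refine le_trans ?_ hm
    calc ∑ j, y c j ^ 2 ≤ ∑ _j : Fin k, (((m : ℝ) - 1) * δ) ^ 2 := by
          gcongr with j
          have : ((c j : ℕ) : ℝ) ≤ m - 1 := by
            rw [le_sub_iff_add_le]; exact_mod_cast (c j).isLt
          simp only [y]; nlinarith
      _ = k * (((m : ℝ) - 1) * δ) ^ 2 := by simp
  set P : (Fin k → Fin m) → EuclideanSpace ℝ (Fin (k + 1)) :=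
    fun c => WithLp.toLp 2 (Fin.snoc (y c) √(1 - ∑ j, y c j ^ 2))
  refine ⟨P, fun c => norm_toLp_snoc_sqrt _ (hy c), fun c c' hcc' => ?_⟩
  obtain ⟨j, hj⟩ := Function.ne_iff.mp hcc'
  have hj' : (1 : ℝ) ≤ |((c j : ℕ) : ℝ) - (c' j : ℕ)| := by
    have := Int.one_le_abs (z := ((c j : ℕ) : ℤ) - (c' j : ℕ))
      (sub_ne_zero.mpr (by exact_mod_cast Fin.val_ne_of_ne hj))
    exact_mod_cast this
  calc δ ≤ |y c j - y c' j| := by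
        simp only [y, ← mul_sub, abs_mul, abs_of_nonneg hδ]; nlinarith
    _ ≤ dist (P c) (P c') := by
        simpa [P, Real.dist_eq] using PiLp.dist_apply_le (P c) (P c') (Fin.castSucc j)

theorem measure_closedBall_le_of_norm_eq_one {k : ℕ}
    {μ : Measure (EuclideanSpace ℝ (Fin (k + 1)))} [IsProbabilityMeasure μ]
    (hμ : ∀ Q : EuclideanSpace ℝ (Fin (k + 1)) ≃ₗᵢ[ℝ] _, μ.map Q = μ)
    {u : EuclideanSpace ℝ (Fin (k + 1))} (hu : ‖u‖ = 1) {r : ℝ} (hr : 0 < r) :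
    μ (closedBall u r) ≤ ENNReal.ofReal ((3 * (k + 1) * r) ^ k) := by
  set a : ℝ := 3 * (k + 1) * r
  have ha : 0 < a := by positivity
  -- `m ≈ a⁻¹` grid points of mesh `3 r` per axis still fit in the chart of the sphere
  set m : ℕ := ⌊a⁻¹⌋₊ + 1
  have hm : a⁻¹ ≤ m := by simpa [m] using (Nat.lt_floor_add_one a⁻¹).le
  have hgrid : k * (((m : ℝ) - 1) * (3 * r)) ^ 2 ≤ 1 := by
    have hm₁ : ((m : ℝ) - 1) = ⌊a⁻¹⌋₊ := by simp [m]
    have hmesh : ((m : ℝ) - 1) * (3 * r) * (k + 1) ≤ 1 := by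
      calc ((m : ℝ) - 1) * (3 * r) * (k + 1) = ⌊a⁻¹⌋₊ * a := by rw [hm₁]; ring
        _ ≤ a⁻¹ * a := by gcongr; exact Nat.floor_le (by positivity)
        _ = 1 := inv_mul_cancel₀ ha.ne'
    have : 0 ≤ ((m : ℝ) - 1) * (3 * r) := by rw [hm₁]; positivity
    nlinarith
  obtain ⟨P, hP, hsep⟩ := exists_unit_vectors_pairwise_le_dist k m (by positivity) hgrid
  have hcard := card_mul_measure_closedBall_le hμ P u (r := r) (fun c => by rw [hP, hu])
    (hsep.mono fun c c' h => by linarith)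
  rw [measure_univ, Fintype.card_fun, Fintype.card_fin, Fintype.card_fin, ← ofReal_measureReal,
    Nat.cast_pow, ← ENNReal.ofReal_natCast, ← ENNReal.ofReal_pow (by positivity),
    ← ENNReal.ofReal_mul (by positivity), ENNReal.ofReal_le_one] at hcard
  rw [← ofReal_measureReal]
  refine ENNReal.ofReal_le_ofReal ?_
  have hma : 1 ≤ ((m : ℝ) * a) ^ k := one_le_pow₀ (by nlinarith [mul_inv_cancel₀ ha.ne'])
  calc μ.real (closedBall u r) ≤ ((m : ℝ) * a) ^ k * μ.real (closedBall u r) :=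
        le_mul_of_one_le_left measureReal_nonneg hma
    _ = a ^ k * ((m : ℝ) ^ k * μ.real (closedBall u r)) := by rw [mul_pow]; ring
    _ ≤ a ^ k := mul_le_of_le_one_right (by positivity) hcard

theorem norm_sub_inv_norm_smul_le {E : Type*} [NormedAddCommGroup E] [NormedSpace ℝ E]
    {v : E} (hv : ‖v‖ = 1) (w : E) {t : ℝ} (ht : 0 < t) :
    ‖v - ‖w‖⁻¹ • w‖ ≤ 2 * ‖w - t • v‖ / t := by
  have htv : ‖t • v‖ = t := by rw [norm_smul, hv, Real.norm_of_nonneg ht.le, mul_one]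
  have hrescale : ‖t⁻¹ • w - ‖w‖⁻¹ • w‖ ≤ ‖w - t • v‖ / t := by
    rcases eq_or_ne w 0 with rfl | hw
    · simp only [smul_zero, sub_zero, norm_zero, zero_sub, norm_neg, htv, div_self ht.ne',
        zero_le_one]
    calc ‖t⁻¹ • w - ‖w‖⁻¹ • w‖ = |‖w‖ - t| / t := by
          have hw' : 0 < ‖w‖ := norm_pos_iff.mpr hw
          rw [← sub_smul, norm_smul, Real.norm_eq_abs, inv_sub_inv ht.ne' hw'.ne', abs_div,
            abs_of_pos (by positivity : 0 < t * ‖w‖)]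
          field_simp
      _ ≤ ‖w - t • v‖ / t := by
          gcongr; simpa [htv] using abs_norm_sub_norm_le w (t • v)
  calc ‖v - ‖w‖⁻¹ • w‖ ≤ ‖v - t⁻¹ • w‖ + ‖t⁻¹ • w - ‖w‖⁻¹ • w‖ :=
        norm_sub_le_norm_sub_add_norm_sub _ _ _
    _ ≤ ‖w - t • v‖ / t + ‖w - t • v‖ / t := by
        gcongr
        rw [show v - t⁻¹ • w = t⁻¹ • (t • v - w) by rw [smul_sub, inv_smul_smul₀ ht.ne'],
          norm_smul, Real.norm_of_nonneg (inv_nonneg.mpr ht.le), norm_sub_rev, inv_mul_eq_div]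
    _ = 2 * ‖w - t • v‖ / t := by ring

theorem rpow_sub_one_le_mul_rpow_sub_one {ε R n a : ℝ} (hε₀ : 0 ≤ ε) (hε₁ : ε ≤ 1) (hR : 0 < R)
    (ha : 1 ≤ a) (hRn : R ≤ a * n) : n ^ (ε - 1) ≤ a * R ^ (ε - 1) := by
  calc n ^ (ε - 1) ≤ (R / a) ^ (ε - 1) :=
        Real.rpow_le_rpow_of_nonpos (by positivity) (by rwa [div_le_iff₀' (by positivity)])
          (by linarith)
    _ = a ^ (1 - ε) * R ^ (ε - 1) := by
        rw [Real.div_rpow hR.le (by positivity), div_eq_mul_inv, ← Real.rpow_neg (by positivity),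
          neg_sub, mul_comm]
    _ ≤ a * R ^ (ε - 1) := by
        gcongr
        calc a ^ (1 - ε) ≤ a ^ (1 : ℝ) := Real.rpow_le_rpow_of_exponent_le ha (by linarith)
          _ = a := Real.rpow_one a

theorem dist_inv_norm_smul_le_of_norm_sub_smul_le {E : Type*} [NormedAddCommGroup E]
    [NormedSpace ℝ E] {v w : E} (hv : ‖v‖ = 1) {n D ε R : ℝ} (hn : 1 ≤ n) (hD : 0 ≤ D)
    (hε₀ : 0 ≤ ε) (hε₁ : ε ≤ 1) (hR : 0 < R) (hRw : R ≤ ‖w‖) (hw : ‖w - n • v‖ ≤ D * n ^ ε) :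
    dist v (‖w‖⁻¹ • w) ≤ 2 * D * (1 + D) * R ^ (ε - 1) := by
  have hn₀ : 0 < n := by linarith
  have hnε : n ^ ε ≤ n := Real.rpow_le_self_of_one_le hn hε₁
  have hRn : R ≤ (1 + D) * n := by
    calc R ≤ ‖w - n • v‖ + ‖n • v‖ := hRw.trans (norm_le_norm_sub_add _ _)
      _ ≤ D * n + n := by
          rw [norm_smul, hv, Real.norm_of_nonneg hn₀.le, mul_one]
          nlinarith
      _ = (1 + D) * n := by ring
  calc dist v (‖w‖⁻¹ • w) ≤ 2 * ‖w - n • v‖ / n := by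
        rw [dist_eq_norm]; exact norm_sub_inv_norm_smul_le hv w hn₀
    _ ≤ 2 * (D * n ^ ε) / n := by gcongr
    _ = 2 * D * n ^ (ε - 1) := by rw [Real.rpow_sub_one hn₀.ne']; ring
    _ ≤ 2 * D * ((1 + D) * R ^ (ε - 1)) := by
        gcongr; exact rpow_sub_one_le_mul_rpow_sub_one hε₀ hε₁ hR (by linarith) hRn
    _ = 2 * D * (1 + D) * R ^ (ε - 1) := by ring

theorem norm_le_sqrt_card_mul_of_forall_abs_le {ι : Type*} [Fintype ι] (w : EuclideanSpace ℝ ι)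
    {a : ℝ} (ha : 0 ≤ a) (h : ∀ j, |w j| ≤ a) : ‖w‖ ≤ √(Fintype.card ι) * a := by
  rw [EuclideanSpace.norm_eq, ← Real.sqrt_sq ha, ← Real.sqrt_mul (Nat.cast_nonneg _)]
  gcongr
  calc ∑ j, ‖w j‖ ^ 2 ≤ ∑ _j : ι, a ^ 2 := by
        gcongr with j; rw [Real.norm_eq_abs]; exact h j
    _ = Fintype.card ι * a ^ 2 := by simp

theorem norminf_le_norm {d : ℕ} (x : Zd d) :
    (norminf x : ℝ) ≤ ‖(WithLp.toLp 2 fun j => (x j : ℝ) : EuclideanSpace ℝ (Fin d))‖ := by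
  set w : EuclideanSpace ℝ (Fin d) := WithLp.toLp 2 fun j => (x j : ℝ)
  have : norminf x ≤ ⌊‖w‖⌋₊ := Finset.sup_le fun j _ => Nat.le_floor <| by
    simpa [w, Nat.cast_natAbs] using PiLp.norm_apply_le w j
  exact (Nat.cast_le.mpr this).trans (Nat.floor_le (norm_nonneg w))

theorem measure_directions_through_point_general (d : ℕ)
    (ε : ℝ) (hε : ε ∈ Set.Ioo (0:ℝ) 1) :
    ∃ C : ℝ, 0 < C ∧
    ∀ x : Zd d, 1 ≤ norminf x →
    ∀ lam : Measure (EuclideanSpace ℝ (Fin d)), IsProbabilityMeasure lam →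
    lam {v | ‖v‖ ≠ 1} = 0 →
    (∀ Q : EuclideanSpace ℝ (Fin d) ≃ₗᵢ[ℝ] EuclideanSpace ℝ (Fin d), lam.map Q = lam) →
    lam {v | ∃ n : ℕ, 1 ≤ n ∧ ∀ j, |(x j : ℝ) - (n : ℝ) * v j| ≤ (n : ℝ) ^ ε}
      ≤ ENNReal.ofReal (C * (norminf x : ℝ) ^ ((ε - 1) * ((d : ℝ) - 1))) := by
  obtain _ | k := d
  · exact ⟨1, one_pos, fun x hx => by simp [norminf] at hx⟩
  set D : ℝ := √(k + 1 : ℕ)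
  refine ⟨(3 * (k + 1) * (2 * D * (1 + D))) ^ k, by positivity,
    fun x hx lam _ hsphere hinv => ?_⟩
  set w : EuclideanSpace ℝ (Fin (k + 1)) := WithLp.toLp 2 fun j => (x j : ℝ)
  set R : ℝ := (norminf x : ℝ)
  have hR : 0 < R := by simp only [R]; exact_mod_cast hx
  set r := 2 * D * (1 + D) * R ^ (ε - 1)
  have hsub : {v | ∃ n : ℕ, 1 ≤ n ∧ ∀ j, |(x j : ℝ) - (n : ℝ) * v j| ≤ (n : ℝ) ^ ε} ⊆
      closedBall (‖w‖⁻¹ • w) r ∪ {v | ‖v‖ ≠ 1} := by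
    rintro v ⟨n, hn, hv⟩
    by_cases hv₁ : ‖v‖ = 1
    · refine Or.inl (dist_inv_norm_smul_le_of_norm_sub_smul_le hv₁ (Nat.one_le_cast.mpr hn)
        (by positivity) hε.1.le hε.2.le hR (norminf_le_norm x) ?_)
      simpa [D] using norm_le_sqrt_card_mul_of_forall_abs_le (w - (n : ℝ) • v) (by positivity) hv
    · exact Or.inr hv₁
  have hu : ‖‖w‖⁻¹ • w‖ = 1 := by
    rw [norm_smul, norm_inv, norm_norm, inv_mul_cancel₀ (hR.trans_le (norminf_le_norm x)).ne']
  calc lam {v | ∃ n : ℕ, 1 ≤ n ∧ ∀ j, |(x j : ℝ) - (n : ℝ) * v j| ≤ (n : ℝ) ^ ε}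
      ≤ lam (closedBall (‖w‖⁻¹ • w) r) + lam {v | ‖v‖ ≠ 1} :=
        (measure_mono hsub).trans (measure_union_le _ _)
    _ ≤ ENNReal.ofReal ((3 * (k + 1) * r) ^ k) := by
        rw [hsphere, add_zero]
        exact measure_closedBall_le_of_norm_eq_one hinv hu (by positivity)
    _ = _ := by
        congr 1
        push_cast
        rw [add_sub_cancel_right, Real.rpow_mul_natCast hR.le, ← mul_pow]
        ring

/-- For `d ≥ 3` and `ε ∈ (0,1)` there is `C = C(d,ε) < ∞` such that for every lattice point
`x ≠ 0`, the normalized rotation-invariant (Haar) measure of the set of directions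
`{v ∈ S^{d-1} : x ∈ ⋃_{n≥1} B(nv, n^ε)}` (balls in the `ℓ^∞` distance) is at most
`C |x|^{(ε-1)(d-1)}`. -/
theorem measure_directions_through_point (d : ℕ) (hd : 3 ≤ d)
    (ε : ℝ) (hε : ε ∈ Set.Ioo (0:ℝ) 1) :
    ∃ C : ℝ, 0 < C ∧
    ∀ x : Zd d, 1 ≤ norminf x →
    ∀ lam : Measure (EuclideanSpace ℝ (Fin d)), IsProbabilityMeasure lam →
    lam {v | ‖v‖ ≠ 1} = 0 →
    (∀ Q : EuclideanSpace ℝ (Fin d) ≃ₗᵢ[ℝ] EuclideanSpace ℝ (Fin d), lam.map Q = lam) →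
    lam {v | ∃ n : ℕ, 1 ≤ n ∧ ∀ j, |(x j : ℝ) - (n : ℝ) * v j| ≤ (n : ℝ) ^ ε}
      ≤ ENNReal.ofReal (C * (norminf x : ℝ) ^ ((ε - 1) * ((d : ℝ) - 1))) :=
  measure_directions_through_point_general d ε hε
end

section
/- Let d ≥ 3 and ε ∈ (0,1). There exists an integer m such that for every unit vector v ∈ R^d there exists a Z^d-valued sequence (z_i)_{i=1}^∞ with z_1 ∈ B(0,m) and |z_i| → ∞ such that for all i ≥ 1: (a) B(z_i, (1/2)|z_i|^ε) ⊆ ∪_{n=1}^∞ B(nv, n^ε), and (b) both B(z_i, (1/8)|z_i|^ε) and B(z_{i+1}, (1/8)|z_{i+1}|^ε) are subsets of B(z_{i+1}, (1/4)|z_{i+1}|^ε). -/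
/-- Discrete ball (in `ℤ^d`, `ℓ^∞` distance) with real center and radius. -/
def ballZR (d : ℕ) (c : Fin d → ℝ) (r : ℝ) : Set (Zd d) :=
  {y | ∀ j, |(y j : ℝ) - c j| ≤ r}

lemma rpow_add_le_add_rpow' {x y p : ℝ} (hx : 0 ≤ x) (hy : 0 ≤ y) (hp : 0 ≤ p) (hp1 : p ≤ 1) :
    (x + y) ^ p ≤ x ^ p + y ^ p := by
  have h := NNReal.rpow_add_le_add_rpow (⟨x, hx⟩ : NNReal) (⟨y, hy⟩ : NNReal) hp hp1
  have h2 := NNReal.coe_le_coe.mpr h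
  push_cast [NNReal.coe_rpow] at h2
  exact h2

lemma natAbs_le_sup {d : ℕ} (x : Zd d) (j : Fin d) : (x j).natAbs ≤ norminf x := by
  exact Finset.le_sup (f := fun j => (x j).natAbs) (Finset.mem_univ j)

/-- For `d ≥ 3` and `ε ∈ (0,1)` there is an integer `m` such that for every Euclidean unit
vector `v ∈ ℝ^d` there is a lattice sequence `(z_i)` with `z_0 ∈ B(0,m)` and `|z_i| → ∞`
such that for all `i`: (a) `B(z_i, ½|z_i|^ε) ⊆ ⋃_{n≥1} B(nv, n^ε)`, and (b) both
`B(z_i, ⅛|z_i|^ε)` and `B(z_{i+1}, ⅛|z_{i+1}|^ε)` are contained in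
`B(z_{i+1}, ¼|z_{i+1}|^ε)`. -/
theorem paraboloid_chain_of_balls (d : ℕ) (hd : 3 ≤ d) (ε : ℝ) (hε : ε ∈ Set.Ioo (0:ℝ) 1) :
    ∃ m : ℕ, ∀ v : EuclideanSpace ℝ (Fin d), ‖v‖ = 1 →
    ∃ z : ℕ → Zd d,
      norminf (z 0) ≤ m ∧
      Filter.Tendsto (fun i => norminf (z i)) Filter.atTop Filter.atTop ∧
      ∀ i : ℕ,
        (ballZR d (fun j => ((z i j : ℝ))) ((1/2) * (norminf (z i) : ℝ) ^ ε)
          ⊆ {y : Zd d | ∃ n : ℕ, 1 ≤ n ∧ ∀ j, |(y j : ℝ) - (n : ℝ) * v j| ≤ (n : ℝ) ^ ε}) ∧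
        (ballZR d (fun j => ((z i j : ℝ))) ((1/8) * (norminf (z i) : ℝ) ^ ε)
          ⊆ ballZR d (fun j => ((z (i+1) j : ℝ))) ((1/4) * (norminf (z (i+1)) : ℝ) ^ ε)) ∧
        (ballZR d (fun j => ((z (i+1) j : ℝ))) ((1/8) * (norminf (z (i+1)) : ℝ) ^ ε)
          ⊆ ballZR d (fun j => ((z (i+1) j : ℝ))) ((1/4) * (norminf (z (i+1)) : ℝ) ^ ε)) := by
  obtain ⟨hε0, hε1⟩ := hε
  have hd3 : (3:ℝ) ≤ (d:ℝ) := by exact_mod_cast hd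
  have hd0 : (0:ℝ) < d := by linarith
  have hdN : 0 < d := by exact_mod_cast hd0
  haveI : Nonempty (Fin d) := ⟨⟨0, hdN⟩⟩
  set s : ℝ := Real.sqrt d with hs
  have hs0 : 0 < s := Real.sqrt_pos.mpr hd0
  have hs1 : 1 ≤ s := by
    rw [hs, show (1:ℝ) = Real.sqrt 1 by simp]
    exact Real.sqrt_le_sqrt (by linarith)
  set T : ℝ := (18:ℝ) ^ (1/ε) with hT
  have hT1 : 1 ≤ T := Real.one_le_rpow (by norm_num) (by positivity)
  obtain ⟨N, hN, hN1⟩ : ∃ N : ℕ, s * (T + 1) ≤ (N:ℝ) ∧ 1 ≤ N :=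
    ⟨⌈s * (T + 1)⌉₊ + 1,
      le_trans (Nat.le_ceil _) (by exact_mod_cast Nat.le_succ _),
      Nat.le_add_left 1 _⟩
  refine ⟨N, ?_⟩
  intro v hv
  -- coordinates of a unit vector
  have hvsum : ∑ j, (v j) ^ 2 = 1 := by
    have h := EuclideanSpace.norm_eq v
    rw [hv] at h
    have h3 : (∑ j, ‖v j‖ ^ 2) = 1 := Real.sqrt_eq_one.mp h.symm
    simpa [Real.norm_eq_abs, sq_abs] using h3
  have hv1 : ∀ j, |v j| ≤ 1 := by
    intro j
    have h1 : (v j) ^ 2 ≤ 1 := by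
      rw [← hvsum]
      exact Finset.single_le_sum (f := fun k => (v k) ^ 2)
        (fun k _ => sq_nonneg _) (Finset.mem_univ j)
    nlinarith [abs_nonneg (v j), sq_abs (v j)]
  have hj0 : ∃ j, 1 / s ≤ |v j| := by
    by_contra hcon
    push_neg at hcon
    have hlt : ∀ j : Fin d, (v j) ^ 2 < 1 / d := by
      intro j
      have h1 : |v j| < 1 / s := hcon j
      have h2 : (v j) ^ 2 < (1 / s) ^ 2 := by
        nlinarith [abs_nonneg (v j), sq_abs (v j)]
      have h3 : (1 / s) ^ 2 = 1 / d := by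
        rw [div_pow, one_pow, hs, Real.sq_sqrt hd0.le]
      linarith
    have := Finset.sum_lt_sum_of_nonempty Finset.univ_nonempty (fun j _ => hlt j)
    rw [hvsum, Finset.sum_const, Finset.card_univ, Fintype.card_fin, nsmul_eq_mul,
      mul_one_div, div_self hd0.ne'] at this
    exact lt_irrefl _ this
  obtain ⟨j₀, hj₀⟩ := hj0
  -- the sequence
  set z : ℕ → Zd d := fun i j => round (((N : ℝ) + i) * v j) with hz
  have hzr : ∀ (i : ℕ) (j : Fin d), |(z i j : ℝ) - ((N : ℝ) + i) * v j| ≤ 1 / 2 := by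
    intro i j
    simpa [hz, abs_sub_comm] using abs_sub_round (((N : ℝ) + i) * v j)
  have hnN : ∀ i : ℕ, (1:ℝ) ≤ (N : ℝ) + i := by
    intro i
    have h1 : (1:ℝ) ≤ (N:ℝ) := by exact_mod_cast hN1
    have h2 : (0:ℝ) ≤ (i:ℝ) := Nat.cast_nonneg i
    linarith
  have habs : ∀ (i : ℕ) (j : Fin d), ((z i j).natAbs : ℝ) = |(z i j : ℝ)| := by
    intro i j
    rw [Nat.cast_natAbs]
    norm_num
  have hr0 : ∀ i : ℕ, (0:ℝ) ≤ (norminf (z i) : ℝ) := fun i => Nat.cast_nonneg _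
  have hF1 : ∀ i : ℕ, (norminf (z i) : ℝ) ≤ (N : ℝ) + i := by
    intro i
    have hle : norminf (z i) ≤ N + i := by
      apply Finset.sup_le
      intro j _
      have h1 : |(z i j : ℝ)| ≤ ((N:ℝ) + i) + 1/2 := by
        have h2 : |((N : ℝ) + i) * v j| ≤ (N:ℝ) + i := by
          rw [abs_mul, abs_of_nonneg (by linarith [hnN i])]
          calc ((N:ℝ) + i) * |v j| ≤ ((N:ℝ) + i) * 1 :=
            mul_le_mul_of_nonneg_left (hv1 j) (by linarith [hnN i])
          _ = (N:ℝ) + i := mul_one _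
        have h3 := hzr i j
        calc |(z i j : ℝ)| ≤ |(z i j : ℝ) - ((N : ℝ) + i) * v j| + |((N : ℝ) + i) * v j| := by
              have := abs_sub_le (z i j : ℝ) (((N : ℝ) + i) * v j) 0
              simpa using this
        _ ≤ 1/2 + ((N:ℝ) + i) := by linarith
        _ = ((N:ℝ) + i) + 1/2 := by ring
      have h4 : ((z i j).natAbs : ℝ) < ((N + i + 1 : ℕ) : ℝ) := by
        rw [habs i j]
        push_cast
        linarith
      have h5 : (z i j).natAbs < N + i + 1 := by exact_mod_cast h4
      omega
    exact_mod_cast hle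
  have hF2 : ∀ i : ℕ, ((N : ℝ) + i) / s - 1/2 ≤ (norminf (z i) : ℝ) := by
    intro i
    have h1 : ((N:ℝ) + i) / s ≤ |((N : ℝ) + i) * v j₀| := by
      rw [abs_mul, abs_of_nonneg (by linarith [hnN i]), div_eq_mul_inv, ← one_div]
      exact mul_le_mul_of_nonneg_left hj₀ (by linarith [hnN i])
    have h2 : |((N : ℝ) + i) * v j₀| - 1/2 ≤ |(z i j₀ : ℝ)| := by
      have tri := abs_sub_abs_le_abs_sub (((N : ℝ) + i) * v j₀) (z i j₀ : ℝ)
      have h3 := hzr i j₀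
      rw [abs_sub_comm] at h3
      linarith
    have h4 : |(z i j₀ : ℝ)| ≤ (norminf (z i) : ℝ) := by
      rw [← habs i j₀]
      exact_mod_cast natAbs_le_sup (z i) j₀
    linarith
  have hrT : ∀ i : ℕ, T ≤ (norminf (z i) : ℝ) := by
    intro i
    have h1 : T + 1 ≤ ((N:ℝ) + i) / s := by
      rw [le_div_iff₀ hs0]
      have h0 : (0:ℝ) ≤ (i:ℝ) := Nat.cast_nonneg i
      calc (T + 1) * s = s * (T + 1) := by ring
      _ ≤ (N:ℝ) := hN
      _ ≤ (N:ℝ) + i := by linarith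
    have := hF2 i
    linarith
  have hr18 : ∀ i : ℕ, (18:ℝ) ≤ (norminf (z i) : ℝ) ^ ε := by
    intro i
    have hTe : T ^ ε = 18 := by
      rw [hT, ← Real.rpow_mul (by norm_num), one_div, inv_mul_cancel₀ hε0.ne', Real.rpow_one]
    calc (18:ℝ) = T ^ ε := hTe.symm
    _ ≤ (norminf (z i) : ℝ) ^ ε :=
      Real.rpow_le_rpow (by linarith) (hrT i) hε0.le
  have hre0 : ∀ i : ℕ, (0:ℝ) ≤ (norminf (z i) : ℝ) ^ ε := fun i =>
    Real.rpow_nonneg (hr0 i) ε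
  have hstep : ∀ (i : ℕ) (j : Fin d), |(z i j : ℝ) - (z (i+1) j : ℝ)| ≤ 2 := by
    intro i j
    have h1 := hzr i j
    have h2 := hzr (i+1) j
    have h2' : |(((N : ℝ) + (i+1:ℕ)) * v j) - (z (i+1) j : ℝ)| ≤ 1/2 := by
      rw [abs_sub_comm]; exact h2
    have h3 : |((N : ℝ) + i) * v j - ((N : ℝ) + (i+1:ℕ)) * v j| ≤ 1 := by
      have he : ((N : ℝ) + i) * v j - ((N : ℝ) + (i+1:ℕ)) * v j = -(v j) := by
        push_cast; ring
      rw [he, abs_neg]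
      exact hv1 j
    have t1 := abs_sub_le (z i j : ℝ) (((N : ℝ) + i) * v j) (((N : ℝ) + (i+1:ℕ)) * v j)
    have t2 := abs_sub_le (z i j : ℝ) (((N : ℝ) + (i+1:ℕ)) * v j) (z (i+1) j : ℝ)
    linarith
  have hclose : ∀ i : ℕ, (norminf (z i) : ℝ) ≤ (norminf (z (i+1)) : ℝ) + 2 := by
    intro i
    obtain ⟨j, -, hj⟩ := Finset.exists_mem_eq_sup Finset.univ Finset.univ_nonempty
      (fun j => (z i j).natAbs)
    have h1 : (norminf (z i) : ℝ) = |(z i j : ℝ)| := by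
      rw [show norminf (z i) = (z i j).natAbs from hj, habs i j]
    have h2 : |(z (i+1) j : ℝ)| ≤ (norminf (z (i+1)) : ℝ) := by
      rw [← habs (i+1) j]
      exact_mod_cast natAbs_le_sup (z (i+1)) j
    have h3 := hstep i j
    have tri := abs_sub_abs_le_abs_sub (z i j : ℝ) (z (i+1) j : ℝ)
    linarith
  refine ⟨z, ?_, ?_, ?_⟩
  · have := hF1 0
    push_cast at this
    exact_mod_cast this
  · rw [Filter.tendsto_atTop_atTop]
    intro b
    refine ⟨⌈s * (b + 1)⌉₊, fun i hi => ?_⟩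
    have h1 : s * ((b:ℝ) + 1) ≤ (i:ℝ) := by
      calc s * ((b:ℝ) + 1) ≤ (⌈s * ((b:ℝ) + 1)⌉₊ : ℝ) := Nat.le_ceil _
      _ ≤ (i:ℝ) := by exact_mod_cast hi
    have h2 : (b:ℝ) + 1 ≤ (i:ℝ) / s := by
      rw [le_div_iff₀ hs0]; nlinarith
    have h3 : (i:ℝ) / s ≤ ((N:ℝ) + i) / s := by
      apply (div_le_div_iff_of_pos_right hs0).mpr
      have : (0:ℝ) ≤ (N:ℝ) := Nat.cast_nonneg N
      linarith
    have h4 := hF2 i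
    have : (b:ℝ) ≤ (norminf (z i) : ℝ) := by linarith
    exact_mod_cast this
  · intro i
    refine ⟨?_, ?_, ?_⟩
    · -- (a)
      intro y hy
      refine ⟨N + i, le_trans hN1 (Nat.le_add_right N i), ?_⟩
      intro j
      have hyj := hy j
      have h1 := hzr i j
      have h2 : (norminf (z i) : ℝ) ^ ε ≤ ((N:ℝ) + i) ^ ε :=
        Real.rpow_le_rpow (hr0 i) (hF1 i) hε0.le
      have h3 : (1:ℝ) ≤ ((N:ℝ) + i) ^ ε := Real.one_le_rpow (hnN i) hε0.le
      have tri := abs_sub_le (y j : ℝ) (z i j : ℝ) (((N : ℝ) + i) * v j)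
      have hgc : ((N + i : ℕ) : ℝ) = (N:ℝ) + i := by push_cast; ring
      rw [hgc]
      simp only [ballZR, Set.mem_setOf_eq] at hyj
      linarith
    · -- (b1)
      intro y hy
      intro j
      have hyj := hy j
      have h1 := hstep i j
      have h2 : (norminf (z i) : ℝ) ^ ε ≤ (norminf (z (i+1)) : ℝ) ^ ε + 2 := by
        calc (norminf (z i) : ℝ) ^ ε ≤ ((norminf (z (i+1)) : ℝ) + 2) ^ ε :=
            Real.rpow_le_rpow (hr0 i) (hclose i) hε0.le
        _ ≤ (norminf (z (i+1)) : ℝ) ^ ε + (2:ℝ) ^ ε :=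
            rpow_add_le_add_rpow' (hr0 (i+1)) (by norm_num) hε0.le hε1.le
        _ ≤ (norminf (z (i+1)) : ℝ) ^ ε + 2 := by
            have h5 : (2:ℝ) ^ ε ≤ (2:ℝ) ^ (1:ℝ) :=
              Real.rpow_le_rpow_of_exponent_le (by norm_num) hε1.le
            rw [Real.rpow_one] at h5
            linarith
      have h18 := hr18 (i+1)
      have tri := abs_sub_le (y j : ℝ) (z i j : ℝ) (z (i+1) j : ℝ)
      simp only [ballZR, Set.mem_setOf_eq] at hyj ⊢
      linarith
    · -- (b2)
      intro y hy j
      have hyj := hy j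
      have h18 := hr18 (i+1)
      simp only [ballZR, Set.mem_setOf_eq] at hyj ⊢
      linarith
end
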